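/- arXiv:1102.2650 — 3 statements merged into one kernel-verified Lean document; each statement's English description precedes it below -/
import Mathlib

section
/- Fix β₁ < 0 and let c₁ = e^{β₁}/(1+e^{β₁}) and c₂ = 1 + 1/(2β₁). Suppose c₁ < c₂. For β₂ > 0 define g(v) = β₁·v^{1/3} + β₂·v - I(v^{1/3}) for v ∈ (0,1), where I(u) = (1/2)u log u + (1/2)(1-u) log(1-u). If v ∈ (0,1) satisfies g''(v) ≤ 0, then v^{1/3} ≤ c₁ or v^{1/3} ≥ c₂. -/
/-!
With `u = v^{1/3}` and `logit u = log u - log (1 - u)` one has `I' = logit / 2` and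
`logit' u = 1 / (u (1 - u))`, and two applications of the chain rule give
`g''(v) = u / (9 v²) · (-2β₁ + logit u - 1 / (2 (1 - u)))`.
The prefactor is positive. For `c₁ < u` we have `logit u > β₁`, and for `u < c₂` we have
`-1 / (2 (1 - u)) > β₁`, so on `(c₁, c₂)` the bracket, and hence `g''(v)`, is positive.
-/

noncomputable def Ient (u : ℝ) : ℝ :=
  (1 / 2) * u * Real.log u + (1 / 2) * (1 - u) * Real.log (1 - u)

open Real Set

noncomputable def logit (u : ℝ) : ℝ := log u - log (1 - u)

lemma hasDerivAt_logit {u : ℝ} (hu : u ∈ Ioo (0 : ℝ) 1) :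
    HasDerivAt logit (1 / (u * (1 - u))) u := by
  have h₀ : u ≠ 0 := hu.1.ne'
  have h₁ : 1 - u ≠ 0 := (sub_pos.2 hu.2).ne'
  refine ((hasDerivAt_log h₀).sub ((hasDerivAt_id' u).const_sub 1 |>.log h₁)).congr_deriv ?_
  field_simp
  ring

lemma hasDerivAt_Ient {u : ℝ} (hu : u ∈ Ioo (0 : ℝ) 1) : HasDerivAt Ient (logit u / 2) u := by
  have h₀ : u ≠ 0 := hu.1.ne'
  have h₁ : 1 - u ≠ 0 := (sub_pos.2 hu.2).ne'
  have hlog := ((hasDerivAt_id' u).const_mul (1 / 2 : ℝ)).mul (hasDerivAt_log h₀)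
  have hlog₁ := (((hasDerivAt_id' u).const_sub 1).const_mul (1 / 2 : ℝ)).mul
    (((hasDerivAt_id' u).const_sub 1).log h₁)
  refine (hlog.add hlog₁).congr_deriv ?_
  rw [logit]
  field_simp
  ring

lemma hasDerivAt_rpow_one_third {v : ℝ} (hv : 0 < v) :
    HasDerivAt (fun x : ℝ => x ^ ((1 : ℝ) / 3)) (v ^ ((1 : ℝ) / 3) / (3 * v)) v := by
  convert Real.hasDerivAt_rpow_const (p := (1 : ℝ) / 3) (Or.inl hv.ne') using 1
  rw [Real.rpow_sub hv, Real.rpow_one]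
  ring

lemma rpow_one_third_mem_Ioo {v : ℝ} (hv : v ∈ Ioo (0 : ℝ) 1) :
    v ^ ((1 : ℝ) / 3) ∈ Ioo (0 : ℝ) 1 :=
  ⟨rpow_pos_of_pos hv.1 _, rpow_lt_one hv.1.le hv.2 (by norm_num)⟩

noncomputable def energy (β₁ β₂ v : ℝ) : ℝ :=
  β₁ * v ^ ((1 : ℝ) / 3) + β₂ * v - Ient (v ^ ((1 : ℝ) / 3))

noncomputable def energyDeriv (β₁ β₂ v : ℝ) : ℝ :=
  (β₁ - logit (v ^ ((1 : ℝ) / 3)) / 2) * (v ^ ((1 : ℝ) / 3) / (3 * v)) + β₂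

noncomputable def curvatureFactor (β u : ℝ) : ℝ :=
  -2 * β + logit u - 1 / (2 * (1 - u))

variable {β₁ β₂ v : ℝ}

lemma hasDerivAt_energy (hv : v ∈ Ioo (0 : ℝ) 1) :
    HasDerivAt (energy β₁ β₂) (energyDeriv β₁ β₂ v) v := by
  have hu := hasDerivAt_rpow_one_third hv.1
  refine (((hu.const_mul β₁).add ((hasDerivAt_id' v).const_mul β₂)).sub
    ((hasDerivAt_Ient (rpow_one_third_mem_Ioo hv)).comp v hu)).congr_deriv ?_
  rw [energyDeriv]
  ring

lemma hasDerivAt_energyDeriv (hv : v ∈ Ioo (0 : ℝ) 1) :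
    HasDerivAt (energyDeriv β₁ β₂)
      (v ^ ((1 : ℝ) / 3) / (9 * v ^ 2) * curvatureFactor β₁ (v ^ ((1 : ℝ) / 3))) v := by
  have hu := hasDerivAt_rpow_one_third hv.1
  have hu₀ := rpow_one_third_mem_Ioo hv
  have hL := (hasDerivAt_logit hu₀).comp v hu
  have h₀ : v ^ ((1 : ℝ) / 3) ≠ 0 := hu₀.1.ne'
  have h₁ : 1 - v ^ ((1 : ℝ) / 3) ≠ 0 := (sub_pos.2 hu₀.2).ne'
  have hv₀ : v ≠ 0 := hv.1.ne'
  refine ((((hL.div_const 2).const_sub β₁).mul (hu.div ((hasDerivAt_id' v).const_mul 3)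
    (by positivity))).add_const β₂).congr_deriv ?_
  simp only [curvatureFactor, Pi.div_apply, Function.comp_apply]
  field_simp
  ring

lemma deriv_deriv_of_eqOn_energy {g : ℝ → ℝ} (hg : EqOn g (energy β₁ β₂) (Ioo 0 1))
    (hv : v ∈ Ioo (0 : ℝ) 1) :
    deriv (deriv g) v =
      v ^ ((1 : ℝ) / 3) / (9 * v ^ 2) * curvatureFactor β₁ (v ^ ((1 : ℝ) / 3)) := by
  have hg' : EqOn (deriv g) (energyDeriv β₁ β₂) (Ioo 0 1) := fun x hx =>
    (hg.deriv isOpen_Ioo hx).trans (hasDerivAt_energy hx).deriv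
  exact (hg'.deriv isOpen_Ioo hv).trans (hasDerivAt_energyDeriv hv).deriv

lemma lt_logit_of_exp_div_lt {β u : ℝ} (hu : u ∈ Ioo (0 : ℝ) 1) (h : exp β / (1 + exp β) < u) :
    β < logit u := by
  have h₁ : 0 < 1 - u := sub_pos.2 hu.2
  rw [logit, ← log_div hu.1.ne' h₁.ne', lt_log_iff_exp_lt (div_pos hu.1 h₁), lt_div_iff₀ h₁]
  rw [div_lt_iff₀ (by positivity)] at h
  linarith

lemma lt_neg_one_div_two_mul_one_sub {β u : ℝ} (hβ : β < 0) (h : u < 1 + 1 / (2 * β)) :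
    β < -1 / (2 * (1 - u)) := by
  have h₁ : -1 / (2 * β) < 1 - u := by rw [neg_div]; linarith
  have h₀ : 0 < 1 - u := lt_trans (div_pos_of_neg_of_neg (by norm_num) (by linarith)) h₁
  rw [lt_div_iff₀ (by positivity)]
  rw [div_lt_iff_of_neg (by linarith)] at h₁
  linarith

lemma curvatureFactor_pos {β u : ℝ} (hβ : β < 0) (hu : u ∈ Ioo (0 : ℝ) 1)
    (h₁ : exp β / (1 + exp β) < u) (h₂ : u < 1 + 1 / (2 * β)) : 0 < curvatureFactor β u := by
  have hlogit := lt_logit_of_exp_div_lt hu h₁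
  have hpole := lt_neg_one_div_two_mul_one_sub hβ h₂
  rw [neg_div] at hpole
  rw [curvatureFactor]
  linarith

theorem second_deriv_dichotomy_general (β₁ β₂ : ℝ) (hβ₁ : β₁ < 0)
    (c₁ c₂ : ℝ) (hc₁ : c₁ = Real.exp β₁ / (1 + Real.exp β₁)) (hc₂ : c₂ = 1 + 1 / (2 * β₁))
    (g : ℝ → ℝ)
    (hg : ∀ v ∈ Set.Ioo (0 : ℝ) 1,
      g v = β₁ * v ^ ((1 : ℝ) / 3) + β₂ * v - Ient (v ^ ((1 : ℝ) / 3)))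
    (v : ℝ) (hv : v ∈ Set.Ioo (0 : ℝ) 1)
    (hg'' : deriv (deriv g) v ≤ 0) :
    v ^ ((1 : ℝ) / 3) ≤ c₁ ∨ c₂ ≤ v ^ ((1 : ℝ) / 3) := by
  rw [deriv_deriv_of_eqOn_energy (fun x hx => hg x hx) hv] at hg''
  have hu := rpow_one_third_mem_Ioo hv
  have hprefactor : 0 < v ^ ((1 : ℝ) / 3) / (9 * v ^ 2) := div_pos hu.1 (by nlinarith [hv.1])
  subst hc₁ hc₂
  by_contra! h
  exact (mul_pos hprefactor (curvatureFactor_pos hβ₁ hu h.1 h.2)).not_ge hg''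

theorem second_deriv_dichotomy (β₁ β₂ : ℝ) (hβ₁ : β₁ < 0) (hβ₂ : 0 < β₂)
    (c₁ c₂ : ℝ) (hc₁ : c₁ = Real.exp β₁ / (1 + Real.exp β₁)) (hc₂ : c₂ = 1 + 1 / (2 * β₁))
    (hcc : c₁ < c₂)
    (g : ℝ → ℝ)
    (hg : ∀ v ∈ Set.Ioo (0 : ℝ) 1,
      g v = β₁ * v ^ ((1 : ℝ) / 3) + β₂ * v - Ient (v ^ ((1 : ℝ) / 3)))
    (v : ℝ) (hv : v ∈ Set.Ioo (0 : ℝ) 1)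
    (hg'' : deriv (deriv g) v ≤ 0) :
    v ^ ((1 : ℝ) / 3) ≤ c₁ ∨ c₂ ≤ v ^ ((1 : ℝ) / 3) :=
  second_deriv_dichotomy_general β₁ β₂ hβ₁ c₁ c₂ hc₁ hc₂ g hg v hv hg''
end

section
/- Fix β₁ < 0 with c₁ := e^{β₁}/(1+e^{β₁}) < c₂ := 1 + 1/(2β₁), and suppose 0 < β₂ < β̃₂. Define ℓ(u) = β₁u + β₂u³ - I(u) and ℓ̃(u) = β₁u + β̃₂u³ - I(u) on [0,1]. If ℓ attains its maximum over [0,1] at some point u₁ ∈ [0,c₁] and also at some point u₂ ∈ [c₂,1], then max_{u ≤ c₁} ℓ̃(u) < max_{u ≥ c₂} ℓ̃(u). -/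
theorem tilted_max_comparison (β₁ β₂ βt₂ : ℝ) (hβ₁ : β₁ < 0)
    (c₁ c₂ : ℝ) (hc₁ : c₁ = Real.exp β₁ / (1 + Real.exp β₁)) (hc₂ : c₂ = 1 + 1 / (2 * β₁))
    (hcc : c₁ < c₂) (hβ : 0 < β₂) (hββ : β₂ < βt₂)
    (ℓ ℓt : ℝ → ℝ)
    (hℓ : ℓ = fun u => β₁ * u + β₂ * u ^ 3 - Ient u)
    (hℓt : ℓt = fun u => β₁ * u + βt₂ * u ^ 3 - Ient u)
    (u₁ u₂ : ℝ) (hu₁ : u₁ ∈ Set.Icc (0 : ℝ) c₁) (hu₂ : u₂ ∈ Set.Icc c₂ 1)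
    (hmax₁ : ∀ v ∈ Set.Icc (0 : ℝ) 1, ℓ v ≤ ℓ u₁)
    (hmax₂ : ∀ v ∈ Set.Icc (0 : ℝ) 1, ℓ v ≤ ℓ u₂) :
    sSup (ℓt '' Set.Icc (0 : ℝ) c₁) < sSup (ℓt '' Set.Icc c₂ 1) := by
  set δ := βt₂ - β₂ with hδ
  have hδpos : 0 < δ := by simp [hδ]; linarith
  have hexp : 0 < Real.exp β₁ := Real.exp_pos _
  have hc₁pos : 0 < c₁ := by
    rw [hc₁]; positivity
  have hrel : ∀ u, ℓt u = ℓ u + δ * u ^ 3 := by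
    intro u; simp [hℓ, hℓt, hδ]; ring
  have hc₂le1 : c₂ ≤ 1 := le_trans hu₂.1 hu₂.2
  have hu₁mem : u₁ ∈ Set.Icc (0 : ℝ) 1 :=
    ⟨hu₁.1, le_trans hu₁.2 (le_trans hcc.le hc₂le1)⟩
  have hu₂mem : u₂ ∈ Set.Icc (0 : ℝ) 1 :=
    ⟨le_trans (le_trans hc₁pos.le hcc.le) hu₂.1, hu₂.2⟩
  have heq : ℓ u₁ = ℓ u₂ :=
    le_antisymm (hmax₂ u₁ hu₁mem) (hmax₁ u₂ hu₂mem)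
  -- upper bound for left sup
  have hL : sSup (ℓt '' Set.Icc (0 : ℝ) c₁) ≤ ℓ u₁ + δ * c₁ ^ 3 := by
    apply csSup_le
    · exact (Set.nonempty_Icc.2 hc₁pos.le).image _
    · rintro x ⟨v, hv, rfl⟩
      rw [hrel]
      have h1 : ℓ v ≤ ℓ u₁ :=
        hmax₁ v ⟨hv.1, le_trans hv.2 (le_trans hcc.le hc₂le1)⟩
      have h2 : v ^ 3 ≤ c₁ ^ 3 := pow_le_pow_left₀ hv.1 hv.2 3
      nlinarith
  -- lower bound for right sup
  have hbdd : BddAbove (ℓt '' Set.Icc c₂ 1) := by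
    refine ⟨ℓ u₂ + δ * 1, ?_⟩
    rintro x ⟨v, hv, rfl⟩
    rw [hrel]
    have hv01 : v ∈ Set.Icc (0 : ℝ) 1 :=
      ⟨le_trans (le_trans hc₁pos.le hcc.le) hv.1, hv.2⟩
    have h1 : ℓ v ≤ ℓ u₂ := hmax₂ v hv01
    have h2 : v ^ 3 ≤ 1 := by calc v ^ 3 ≤ 1 ^ 3 := pow_le_pow_left₀ hv01.1 hv01.2 3
        _ = 1 := one_pow 3
    nlinarith
  have hR : ℓt u₂ ≤ sSup (ℓt '' Set.Icc c₂ 1) :=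
    le_csSup hbdd ⟨u₂, hu₂, rfl⟩
  have hmid : ℓ u₁ + δ * c₁ ^ 3 < ℓt u₂ := by
    rw [hrel, heq]
    have h1 : c₁ ^ 3 < c₂ ^ 3 := pow_lt_pow_left₀ hcc hc₁pos.le (by norm_num)
    have h2 : c₂ ^ 3 ≤ u₂ ^ 3 :=
      pow_le_pow_left₀ (le_trans hc₁pos.le hcc.le) hu₂.1 3
    nlinarith
  linarith
end

section
/- Let h : [0,1]² → {0,1} be symmetric measurable and let λ(x) = ∫₀¹ h(x,y) dy. Let X₀, X₁, X₂, ... be i.i.d. uniform on [0,1] and let R = |{i ≥ 1 : h(X_i, X_j) = 1 for all 1 ≤ j < i}|. Then E[R] = Σ_{i≥1} E[λ(X₀)^{i-1}] ≥ 1/(1 - ∫∫ h(x,y) dx dy), where the sum and bound may be +∞. -/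
/-!
Let `A_i` be the event that `h (X i) (X j) = 1` for all `1 ≤ j < i`, so that `R = ∑ 𝟙_{A_i}` and
`E[R] = ∑ P(A_i)`. Since `X_{n+1}, X_1, …, X_n` are i.i.d. uniform, conditioning on `X_{n+1} = x`
makes the `n` constraints independent, each of probability `λ(x)`, so `P(A_{n+1}) = ∫ λ^n`.
Jensen's inequality `(∫ λ)^n ≤ ∫ λ^n` and the geometric series in `∫ λ = ∫∫ h` give the bound.
-/

open MeasureTheory Set ENNReal

lemma pow_lintegral_le_lintegral_pow {α : Type*} [MeasurableSpace α] {μ : Measure α}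
    [IsProbabilityMeasure μ] {f : α → ℝ≥0∞} (hf : AEMeasurable f μ) (n : ℕ) :
    (∫⁻ a, f a ∂μ) ^ n ≤ ∫⁻ a, f a ^ n ∂μ := by
  rcases Nat.eq_zero_or_pos n with rfl | hn
  · simp
  have hn' : (0 : ℝ) < n := by exact_mod_cast hn
  have hLp := eLpNorm'_le_eLpNorm'_of_exponent_le one_pos (by exact_mod_cast hn : (1 : ℝ) ≤ n) μ
    hf.aestronglyMeasurable
  simp only [eLpNorm', enorm_eq_self, rpow_one, div_one, rpow_natCast] at hLp
  calc (∫⁻ a, f a ∂μ) ^ n ≤ ((∫⁻ a, f a ^ n ∂μ) ^ (1 / (n : ℝ))) ^ n := by gcongr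
    _ = ∫⁻ a, f a ^ n ∂μ := by
      rw [← rpow_natCast, ← rpow_mul, one_div_mul_cancel hn'.ne', rpow_one]

lemma inv_one_sub_lintegral_le_tsum_lintegral_pow {α : Type*} [MeasurableSpace α]
    {μ : Measure α} [IsProbabilityMeasure μ] {f : α → ℝ≥0∞} (hf : AEMeasurable f μ) :
    (1 - ∫⁻ a, f a ∂μ)⁻¹ ≤ ∑' n, ∫⁻ a, f a ^ n ∂μ := by
  rw [← tsum_geometric]
  exact ENNReal.tsum_le_tsum fun n => pow_lintegral_le_lintegral_pow hf n

lemma lintegral_encard_setOf_mem {Ω ι : Type*} [MeasurableSpace Ω] [Countable ι]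
    (μ : Measure Ω) {A : ι → Set Ω} (hA : ∀ i, MeasurableSet (A i)) :
    ∫⁻ ω, (({i | ω ∈ A i}.encard : ℕ∞) : ℝ≥0∞) ∂μ = ∑' i, μ (A i) := by
  have hcount : ∀ ω, (({i | ω ∈ A i}.encard : ℕ∞) : ℝ≥0∞) = ∑' i, (A i).indicator 1 ω := by
    intro ω
    rw [← tsum_set_one, tsum_subtype _ fun _ => (1 : ℝ≥0∞)]
    simp only [indicator, mem_ofPred_eq, Pi.one_apply]
  simp_rw [hcount]
  rw [lintegral_tsum fun i => (measurable_one.indicator (hA i)).aemeasurable]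
  exact tsum_congr fun i => lintegral_indicator_one (hA i)

lemma integral_eq_measureReal_of_forall_eq_zero_or_one {α : Type*} [MeasurableSpace α]
    {μ : Measure α} {g : α → ℝ} (hg : MeasurableSet {x | g x = 1})
    (hvals : ∀ x, g x = 0 ∨ g x = 1) :
    ∫ x, g x ∂μ = μ.real {x | g x = 1} := by
  rw [← integral_indicator_one hg]
  congr 1 with x
  rcases hvals x with h | h <;> simp [h, indicator]

lemma Nat.forall_one_le_lt_succ_iff (n : ℕ) (P : ℕ → Prop) :
    (∀ j, 1 ≤ j → j < n + 1 → P j) ↔ ∀ k : Fin n, P (k + 1) := by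
  refine ⟨fun H k => H (k + 1) (by omega) (by omega), fun H j hj1 hj2 => ?_⟩
  obtain ⟨k, rfl⟩ : ∃ k, j = k + 1 := ⟨j - 1, by omega⟩
  exact H ⟨k, by omega⟩

namespace MeasureTheory.Measure

lemma pi_setOf_forall_last_castSucc_mem {α : Type*} [MeasurableSpace α] (μ : Measure α)
    [SigmaFinite μ] {S : Set (α × α)} (hS : MeasurableSet S) (n : ℕ) :
    Measure.pi (fun _ : Fin (n + 1) => μ) {v | ∀ k : Fin n, (v (Fin.last n), v k.castSucc) ∈ S}
      = ∫⁻ x, μ (Prod.mk x ⁻¹' S) ^ n ∂μ := by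
  set C : Set (α × (Fin n → α)) := {p | ∀ k, (p.1, p.2 k) ∈ S}
  have hC : MeasurableSet C := by
    simp only [C, ofPred_forall]
    exact .iInter fun k =>
      (measurable_fst.prodMk ((measurable_pi_apply k).comp measurable_snd)) hS
  have hsection : ∀ x, Prod.mk x ⁻¹' C = univ.pi fun _ => Prod.mk x ⁻¹' S := by
    intro x; ext w; simp [C, Set.mem_pi]
  have hpreimage : {v : Fin (n + 1) → α | ∀ k : Fin n, (v (Fin.last n), v k.castSucc) ∈ S}
      = MeasurableEquiv.piFinSuccAbove (fun _ => α) (Fin.last n) ⁻¹' C := by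
    ext v
    simp [C, MeasurableEquiv.piFinSuccAbove, Fin.init]
  rw [hpreimage,
    (measurePreserving_piFinSuccAbove (fun _ => μ) (Fin.last n)).measure_preimage_equiv,
    prod_apply hC]
  simp only [hsection, pi_pi, Finset.prod_const, Finset.card_univ, Fintype.card_fin]

end MeasureTheory.Measure

lemma ProbabilityTheory.iIndepFun.measure_forall_mem_eq_lintegral_pow {Ω β : Type*}
    [MeasurableSpace Ω] [MeasurableSpace β] {P : Measure Ω} [IsProbabilityMeasure P]
    {X : ℕ → Ω → β} (hXmeas : ∀ i, Measurable (X i)) (hindep : iIndepFun X P)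
    {μ : Measure β} (hdist : ∀ i, P.map (X i) = μ) {S : Set (β × β)} (hS : MeasurableSet S)
    (n : ℕ) :
    P {ω | ∀ k : Fin n, (X (n + 1) ω, X (k + 1) ω) ∈ S} = ∫⁻ x, μ (Prod.mk x ⁻¹' S) ^ n ∂μ := by
  have : IsProbabilityMeasure μ :=
    hdist 0 ▸ Measure.isProbabilityMeasure_map (hXmeas 0).aemeasurable
  let T : Ω → Fin (n + 1) → β := fun ω k => X (k + 1) ω
  have hT : Measurable T := measurable_pi_lambda _ fun k => hXmeas _
  have hlaw : P.map T = Measure.pi fun _ => μ := by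
    have := (hindep.precomp (g := fun k : Fin (n + 1) => (k : ℕ) + 1)
      fun a b hab => Fin.val_injective (by simpa using hab)).map_fun_eq_pi_map
      fun k => (hXmeas _).aemeasurable
    simpa [hdist] using this
  have hB : MeasurableSet
      {v : Fin (n + 1) → β | ∀ k : Fin n, (v (Fin.last n), v k.castSucc) ∈ S} := by
    simp only [ofPred_forall]
    exact .iInter fun k => ((measurable_pi_apply _).prodMk (measurable_pi_apply _)) hS
  rw [← Measure.pi_setOf_forall_last_castSucc_mem μ hS, ← hlaw, Measure.map_apply hT hB]
  rfl

lemma ProbabilityTheory.iIndepFun.lintegral_encard_eq_tsum_lintegral_pow {Ω β : Type*}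
    [MeasurableSpace Ω] [MeasurableSpace β] {P : Measure Ω} [IsProbabilityMeasure P]
    {X : ℕ → Ω → β} (hXmeas : ∀ i, Measurable (X i)) (hindep : iIndepFun X P)
    {μ : Measure β} (hdist : ∀ i, P.map (X i) = μ) {S : Set (β × β)} (hS : MeasurableSet S) :
    ∫⁻ ω, (({i | 1 ≤ i ∧ ∀ j, 1 ≤ j → j < i → (X i ω, X j ω) ∈ S}.encard : ℕ∞) : ℝ≥0∞) ∂P
      = ∑' n, ∫⁻ x, μ (Prod.mk x ⁻¹' S) ^ n ∂μ := by
  have hA_succ (n : ℕ) :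
      {ω | 1 ≤ n + 1 ∧ ∀ j, 1 ≤ j → j < n + 1 → (X (n + 1) ω, X j ω) ∈ S}
        = {ω | ∀ k : Fin n, (X (n + 1) ω, X (k + 1) ω) ∈ S} := by
    ext ω
    simp only [mem_ofPred_eq, Nat.le_add_left, true_and, Nat.forall_one_le_lt_succ_iff]
  have hA : ∀ i, MeasurableSet {ω | 1 ≤ i ∧ ∀ j, 1 ≤ j → j < i → (X i ω, X j ω) ∈ S}
    | 0 => by simp
    | n + 1 => by
      rw [hA_succ, ofPred_forall]
      exact .iInter fun k => ((hXmeas _).prodMk (hXmeas _)) hS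
  refine (lintegral_encard_setOf_mem P hA).trans ?_
  rw [tsum_eq_zero_add' ENNReal.summable]
  simp only [hA_succ, hindep.measure_forall_mem_eq_lintegral_pow hXmeas hdist hS]
  simp

theorem expected_count_bound_general (Ω : Type*) [MeasurableSpace Ω] (ℙ : Measure Ω)
    [IsProbabilityMeasure ℙ]
    (X : ℕ → Ω → ℝ) (hXmeas : ∀ i, Measurable (X i))
    (hindep : ProbabilityTheory.iIndepFun X ℙ)
    (hdist : ∀ i, ℙ.map (X i) = volume.restrict (Set.Icc (0 : ℝ) 1))
    (h : ℝ → ℝ → ℝ) (hmeas : Measurable (Function.uncurry h))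
    (hvals : ∀ x y, h x y = 0 ∨ h x y = 1)
    (lam : ℝ → ℝ) (hlam : ∀ x, lam x = ∫ y in Set.Icc (0 : ℝ) 1, h x y) :
    ((∫⁻ ω, (({i : ℕ | 1 ≤ i ∧ ∀ j, 1 ≤ j → j < i → h (X i ω) (X j ω) = 1}.encard : ℕ∞) :
        ENNReal) ∂ℙ)
      = ∑' i : ℕ, ∫⁻ x in Set.Icc (0 : ℝ) 1, ENNReal.ofReal (lam x ^ i)) ∧
    (1 / ENNReal.ofReal
        (1 - ∫ q : ℝ × ℝ, h q.1 q.2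
          ∂((volume.restrict (Set.Icc (0 : ℝ) 1)).prod (volume.restrict (Set.Icc (0 : ℝ) 1)))))
      ≤ ∫⁻ ω, (({i : ℕ | 1 ≤ i ∧ ∀ j, 1 ≤ j → j < i → h (X i ω) (X j ω) = 1}.encard : ℕ∞) :
        ENNReal) ∂ℙ := by
  set μ := volume.restrict (Icc (0 : ℝ) 1)
  have : IsProbabilityMeasure μ := ⟨by simp [μ]⟩
  set S := Function.uncurry h ⁻¹' {1}
  have hS : MeasurableSet S := hmeas (measurableSet_singleton 1)
  have hlam_pow (x : ℝ) (n : ℕ) : ENNReal.ofReal (lam x ^ n) = μ (Prod.mk x ⁻¹' S) ^ n := by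
    rw [hlam, integral_eq_measureReal_of_forall_eq_zero_or_one (g := h x)
      (measurable_prodMk_left hS) (hvals x), ofReal_pow measureReal_nonneg, ofReal_measureReal]
    rfl
  have hdouble : ENNReal.ofReal (1 - ∫ q, h q.1 q.2 ∂μ.prod μ)
      = 1 - ∫⁻ x, μ (Prod.mk x ⁻¹' S) ∂μ := by
    rw [integral_eq_measureReal_of_forall_eq_zero_or_one (g := fun q : ℝ × ℝ => h q.1 q.2) hS
      fun q => hvals q.1 q.2, ofReal_sub _ measureReal_nonneg, ofReal_one, ofReal_measureReal,
      ← Measure.prod_apply hS]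
    rfl
  have hcount : ∫⁻ ω, (({i : ℕ | 1 ≤ i ∧ ∀ j, 1 ≤ j → j < i → h (X i ω) (X j ω) = 1}.encard :
        ℕ∞) : ENNReal) ∂ℙ = ∑' n, ∫⁻ x, μ (Prod.mk x ⁻¹' S) ^ n ∂μ :=
    hindep.lintegral_encard_eq_tsum_lintegral_pow hXmeas hdist hS
  refine ⟨hcount.trans (tsum_congr fun n => lintegral_congr fun x => (hlam_pow x n).symm), ?_⟩
  rw [hdouble, hcount, one_div]
  exact inv_one_sub_lintegral_le_tsum_lintegral_pow (measurable_measure_prodMk_left hS).aemeasurable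

theorem expected_count_bound (Ω : Type*) [MeasurableSpace Ω] (ℙ : Measure Ω)
    [IsProbabilityMeasure ℙ]
    (X : ℕ → Ω → ℝ) (hXmeas : ∀ i, Measurable (X i))
    (hindep : ProbabilityTheory.iIndepFun X ℙ)
    (hdist : ∀ i, ℙ.map (X i) = volume.restrict (Set.Icc (0 : ℝ) 1))
    (h : ℝ → ℝ → ℝ) (hmeas : Measurable (Function.uncurry h))
    (hsymm : ∀ x y, h x y = h y x) (hvals : ∀ x y, h x y = 0 ∨ h x y = 1)
    (lam : ℝ → ℝ) (hlam : ∀ x, lam x = ∫ y in Set.Icc (0 : ℝ) 1, h x y) :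
    ((∫⁻ ω, (({i : ℕ | 1 ≤ i ∧ ∀ j, 1 ≤ j → j < i → h (X i ω) (X j ω) = 1}.encard : ℕ∞) :
        ENNReal) ∂ℙ)
      = ∑' i : ℕ, ∫⁻ x in Set.Icc (0 : ℝ) 1, ENNReal.ofReal (lam x ^ i)) ∧
    (1 / ENNReal.ofReal
        (1 - ∫ q : ℝ × ℝ, h q.1 q.2
          ∂((volume.restrict (Set.Icc (0 : ℝ) 1)).prod (volume.restrict (Set.Icc (0 : ℝ) 1)))))
      ≤ ∫⁻ ω, (({i : ℕ | 1 ≤ i ∧ ∀ j, 1 ≤ j → j < i → h (X i ω) (X j ω) = 1}.encard : ℕ∞) :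
        ENNReal) ∂ℙ :=
  expected_count_bound_general Ω ℙ X hXmeas hindep hdist h hmeas hvals lam hlam
end
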